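/- Let F : ℝⁿ → ℝᵐ be continuously differentiable, let σ, γ ∈ (0,1), and let 0 < α_min ≤ α_max. Suppose sequences (x^k) in ℝⁿ, weights (α^k) with α^k_i ∈ [α_min, α_max] for all i and k, directions (d^k), and stepsizes (β^k) satisfy for every k: (i) d^k is the Barzilai–Borwein descent direction at x^k for the weights α^k_1,…,α^k_m and d^k ≠ 0; (ii) β^k is an Armijo backtracking stepsize for direction d^k at x^k with parameters σ, γ; (iii) x^{k+1} = x^k + β^k d^k. If the level set {x ∈ ℝⁿ : F_i(x) ≤ F_i(x^0) for all i ∈ {1,…,m}} is bounded, then every accumulation point of the sequence (x^k) is Pareto critical. -/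

import Mathlib

open scoped RealInnerProductSpace

/-- `φ_g(d) = max_{1 ≤ i ≤ m} ⟨g_i, d⟩ + ‖d‖²/2`. -/
noncomputable def phi {n m : ℕ} (g : Fin m → EuclideanSpace ℝ (Fin n))
    (d : EuclideanSpace ℝ (Fin n)) : ℝ :=
  (⨆ i, ⟪g i, d⟫) + ‖d‖ ^ 2 / 2

/-- `x` is Pareto critical: no direction `d` with `⟨∇F_i(x), d⟩ < 0` for all `i`. -/
def ParetoCritical {n m : ℕ} (F : Fin m → EuclideanSpace ℝ (Fin n) → ℝ)
    (x : EuclideanSpace ℝ (Fin n)) : Prop :=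
  ¬ ∃ d : EuclideanSpace ℝ (Fin n), ∀ i, ⟪gradient (F i) x, d⟫ < 0

/-- The Armijo condition at stepsize `β` for direction `d` at `x`:
`F_i(x + βd) - F_i(x) ≤ σβ⟨∇F_i(x), d⟩` for every `i`. -/
def ArmijoAt {n m : ℕ} (F : Fin m → EuclideanSpace ℝ (Fin n) → ℝ)
    (x d : EuclideanSpace ℝ (Fin n)) (σ β : ℝ) : Prop :=
  ∀ i, F i (x + β • d) - F i x ≤ σ * β * ⟪gradient (F i) x, d⟫

/-- `β` is an Armijo backtracking stepsize: `β ∈ (0,1]`, the Armijo condition holds at `β`,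
and either `β = 1` or the Armijo condition fails (for some index) at `β/γ`. -/
def ArmijoBacktrack {n m : ℕ} (F : Fin m → EuclideanSpace ℝ (Fin n) → ℝ)
    (x d : EuclideanSpace ℝ (Fin n)) (σ γ β : ℝ) : Prop :=
  0 < β ∧ β ≤ 1 ∧ ArmijoAt F x d σ β ∧ (β = 1 ∨ ¬ ArmijoAt F x d σ (β / γ))

/-!
The optimal value `θₖ = phi gₖ dₖ` of the direction subproblem is nonpositive and controls the
descent: `⟪∇Fᵢ(xₖ), dₖ⟫ ≤ α_min θₖ`, so every `Fᵢ(xₖ)` decreases. If a cluster point `x*` had a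
common descent direction `u`, then along a subsequence converging to `x*` the values `θₖ` stay below
a negative constant (test the subproblem at a multiple of `u`) and the directions stay bounded.
The Armijo decrease `Fᵢ(xₖ) - Fᵢ(xₖ₊₁) ≥ σ βₖ α_min c` tends to zero, since the monotone sequence
`Fᵢ(xₖ)` converges to `Fᵢ(x*)`, so `βₖ → 0`. But by continuity of the gradients the Armijo condition
holds near `x*` for all stepsizes in a fixed interval `(0, τ]`, so backtracking would have stopped
at `βₖ / γ`.
-/

open Filter Topology Set

section SteepestDescentSubproblem

variable {n m : ℕ}

lemma phi_zero (g : Fin m → EuclideanSpace ℝ (Fin n)) : phi g 0 = 0 := by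
  simp [phi]

lemma inner_add_half_sq_le_phi (g : Fin m → EuclideanSpace ℝ (Fin n))
    (d : EuclideanSpace ℝ (Fin n)) (i : Fin m) : ⟪g i, d⟫ + ‖d‖ ^ 2 / 2 ≤ phi g d := by
  unfold phi
  gcongr
  exact le_ciSup (finite_range fun j => ⟪g j, d⟫).bddAbove i

lemma norm_le_two_mul_of_phi_nonpos {g : Fin m → EuclideanSpace ℝ (Fin n)}
    {d : EuclideanSpace ℝ (Fin n)} (h : phi g d ≤ 0) (i : Fin m) : ‖d‖ ≤ 2 * ‖g i‖ := by
  have hphi := inner_add_half_sq_le_phi g d i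
  have hcs := neg_le_of_abs_le (abs_real_inner_le_norm (g i) d)
  rcases (norm_nonneg d).eq_or_lt with hd | hd
  · rw [← hd]; positivity
  · nlinarith

lemma phi_smul_le [NeZero m] {g : Fin m → EuclideanSpace ℝ (Fin n)}
    {u : EuclideanSpace ℝ (Fin n)} {a : ℝ} (ha : 0 ≤ a) (hu : ∀ i, ⟪g i, u⟫ ≤ -a) :
    phi g ((a / ‖u‖ ^ 2) • u) ≤ -(a ^ 2 / (2 * ‖u‖ ^ 2)) := by
  -- `t = a / ‖u‖ ^ 2` minimizes `-t a + t² ‖u‖² / 2`; for `u = 0` both sides are `0`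
  set t := a / ‖u‖ ^ 2 with ht_def
  have ht : 0 ≤ t := by positivity
  have hsup : (⨆ i, ⟪g i, t • u⟫) ≤ -(t * a) := ciSup_le fun i => by
    rw [real_inner_smul_right]
    nlinarith [hu i]
  have hnorm : ‖t • u‖ ^ 2 = t ^ 2 * ‖u‖ ^ 2 := by
    rw [norm_smul, Real.norm_of_nonneg ht, mul_pow]
  calc phi g (t • u) ≤ -(t * a) + t ^ 2 * ‖u‖ ^ 2 / 2 := by
        unfold phi; rw [hnorm]; linarith
    _ = -(a ^ 2 / (2 * ‖u‖ ^ 2)) := by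
        rcases eq_or_ne ‖u‖ 0 with hu0 | hu0
        · simp [ht_def, hu0]
        · rw [ht_def]; field_simp; ring

variable {v : Fin m → EuclideanSpace ℝ (Fin n)} {w : Fin m → ℝ} {d : EuclideanSpace ℝ (Fin n)}

lemma inner_le_mul_phi_of_phi_nonpos {wmin : ℝ} (hw : ∀ i, wmin ≤ w i) (hwmin : 0 < wmin)
    (hd : phi (fun i => (w i)⁻¹ • v i) d ≤ 0) (i : Fin m) :
    ⟪v i, d⟫ ≤ wmin * phi (fun i => (w i)⁻¹ • v i) d := by
  have hwi : 0 < w i := hwmin.trans_le (hw i)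
  have h := inner_add_half_sq_le_phi (fun i => (w i)⁻¹ • v i) d i
  rw [real_inner_smul_left] at h
  calc ⟪v i, d⟫ = w i * ((w i)⁻¹ * ⟪v i, d⟫) := by field_simp
    _ ≤ w i * phi (fun i => (w i)⁻¹ • v i) d := by
        gcongr; linarith [sq_nonneg ‖d‖]
    _ ≤ wmin * phi (fun i => (w i)⁻¹ • v i) d := mul_le_mul_of_nonpos_right (hw i) hd

lemma norm_le_of_phi_nonpos {wmin : ℝ} (hw : ∀ i, wmin ≤ w i) (hwmin : 0 < wmin)
    (hd : phi (fun i => (w i)⁻¹ • v i) d ≤ 0) (i : Fin m) : ‖d‖ ≤ 2 * ‖v i‖ / wmin := by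
  have hwi : 0 < w i := hwmin.trans_le (hw i)
  calc ‖d‖ ≤ 2 * ‖(w i)⁻¹ • v i‖ := norm_le_two_mul_of_phi_nonpos hd i
    _ = 2 * ‖v i‖ / w i := by
        rw [norm_smul, Real.norm_of_nonneg (inv_nonneg.2 hwi.le)]; ring
    _ ≤ 2 * ‖v i‖ / wmin := by gcongr; exact hw i

lemma phi_le_of_isMin_of_inner_le [NeZero m] {wmax a : ℝ} (hw : ∀ i, 0 < w i)
    (hwmax : ∀ i, w i ≤ wmax) (hd : ∀ d', phi (fun i => (w i)⁻¹ • v i) d ≤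
      phi (fun i => (w i)⁻¹ • v i) d') (ha : 0 ≤ a) {u : EuclideanSpace ℝ (Fin n)}
    (hu : ∀ i, ⟪v i, u⟫ ≤ -a) :
    phi (fun i => (w i)⁻¹ • v i) d ≤ -((a / wmax) ^ 2 / (2 * ‖u‖ ^ 2)) := by
  refine (hd _).trans (phi_smul_le (div_nonneg ha ((hw 0).le.trans (hwmax 0))) fun i => ?_)
  have hwi := hw i
  rw [real_inner_smul_left, ← div_eq_inv_mul, div_le_iff₀ hwi]
  calc ⟪v i, u⟫ ≤ -a := hu i
    _ ≤ -(a / wmax) * w i := by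
        rw [neg_mul, neg_le_neg_iff, div_mul_eq_mul_div, div_le_iff₀ (hwi.trans_le (hwmax i))]
        exact mul_le_mul_of_nonneg_left (hwmax i) ha

end SteepestDescentSubproblem

section Calculus

variable {E : Type*} [NormedAddCommGroup E] [InnerProductSpace ℝ E] [CompleteSpace E]
  {f : E → ℝ}

lemma continuous_gradient_of_contDiff (hf : ContDiff ℝ 1 f) : Continuous (gradient f) :=
  (InnerProductSpace.toDual ℝ E).symm.continuous.comp (hf.continuous_fderiv one_ne_zero)

lemma sub_le_mul_of_inner_gradient_le (hf : ContDiff ℝ 1 f) (x d : E) {t B : ℝ} (ht : 0 < t)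
    (hB : ∀ s ∈ Ioo 0 t, ⟪gradient f (x + s • d), d⟫ ≤ B) : f (x + t • d) - f x ≤ t * B := by
  have hderiv : ∀ s : ℝ, HasDerivAt (fun r : ℝ => f (x + r • d)) ⟪gradient f (x + s • d), d⟫ s := by
    intro s
    have hline : HasDerivAt (fun r : ℝ => x + r • d) d s := by
      simpa using ((hasDerivAt_id s).smul_const d).const_add x
    exact ((hf.differentiable one_ne_zero) (x + s • d)).hasGradientAt.hasFDerivAt.comp_hasDerivAt
      s hline
  obtain ⟨s, hs, hslope⟩ := exists_hasDerivAt_eq_slope (fun r : ℝ => f (x + r • d)) _ ht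
    (hf.continuous.comp (continuous_const.add (continuous_id.smul continuous_const))).continuousOn
    fun r _ => hderiv r
  simp only [sub_zero, zero_smul, add_zero] at hslope
  rw [eq_div_iff ht.ne'] at hslope
  rw [← hslope, mul_comm]
  exact mul_le_mul_of_nonneg_left (hB s hs) ht.le

end Calculus

section Armijo

variable {n m : ℕ} {F : Fin m → EuclideanSpace ℝ (Fin n) → ℝ}

lemma exists_pos_eventually_inner_gradient_le [NeZero m] (hF : ∀ i, ContDiff ℝ 1 (F i))
    {x u : EuclideanSpace ℝ (Fin n)} (hu : ∀ i, ⟪gradient (F i) x, u⟫ < 0) :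
    ∃ a > 0, ∀ᶠ y in 𝓝 x, ∀ i, ⟪gradient (F i) y, u⟫ ≤ -a := by
  obtain ⟨i₀, hi₀⟩ := Finite.exists_max fun i => ⟪gradient (F i) x, u⟫
  refine ⟨-⟪gradient (F i₀) x, u⟫ / 2, by linarith [hu i₀], eventually_all.2 fun i => ?_⟩
  have hcont : Tendsto (fun y => ⟪gradient (F i) y, u⟫) (𝓝 x) (𝓝 ⟪gradient (F i) x, u⟫) :=
    ((continuous_gradient_of_contDiff (hF i)).inner continuous_const).tendsto x
  exact hcont.eventually_le_const (by linarith [hi₀ i, hu i₀])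

lemma ArmijoAt.mul_le_sub {x d : EuclideanSpace ℝ (Fin n)} {σ β b : ℝ}
    (h : ArmijoAt F x d σ β) (hσ : 0 ≤ σ) (hβ : 0 ≤ β)
    (hd : ∀ i, ⟪gradient (F i) x, d⟫ ≤ -b) (i : Fin m) :
    σ * β * b ≤ F i x - F i (x + β • d) := by
  nlinarith [h i, hd i, mul_nonneg hσ hβ]

lemma exists_pos_eventually_armijoAt {ι : Type*} {l : Filter ι} (hF : ∀ i, ContDiff ℝ 1 (F i))
    {σ c D : ℝ} (hσ : σ < 1) (hc : 0 < c) (hD : 0 < D) {x₀ : EuclideanSpace ℝ (Fin n)}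
    {xs ds : ι → EuclideanSpace ℝ (Fin n)} (hx : Tendsto xs l (𝓝 x₀))
    (hdD : ∀ᶠ j in l, ‖ds j‖ ≤ D) (hdesc : ∀ᶠ j in l, ∀ i, ⟪gradient (F i) (xs j), ds j⟫ ≤ -c) :
    ∃ τ > 0, ∀ᶠ j in l, ∀ t ∈ Ioc 0 τ, ArmijoAt F (xs j) (ds j) σ t := by
  set ρ := (1 - σ) * c / D with hρ
  have hρ_pos : 0 < ρ := div_pos (mul_pos (by linarith) hc) hD
  have hnear : ∀ᶠ y in 𝓝 x₀, ∀ i, dist (gradient (F i) y) (gradient (F i) x₀) < ρ / 2 :=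
    eventually_all.2 fun i => (continuous_gradient_of_contDiff (hF i)).continuousAt.eventually
      (Metric.ball_mem_nhds _ (half_pos hρ_pos))
  obtain ⟨η, hη, hball⟩ := Metric.eventually_nhds_iff.1 hnear
  refine ⟨η / (2 * D), by positivity, ?_⟩
  filter_upwards [hx.eventually (Metric.ball_mem_nhds x₀ (half_pos hη)), hdD, hdesc]
    with j hxj hdj hdescj t ht i
  refine (sub_le_mul_of_inner_gradient_le (B := σ * ⟪gradient (F i) (xs j), ds j⟫) (hF i) _ _
    ht.1 fun s hs => ?_).trans_eq (by ring)
  have hseg : dist (xs j + s • ds j) x₀ < η := by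
    have hstep : ‖s • ds j‖ ≤ η / 2 := by
      rw [norm_smul, Real.norm_of_nonneg hs.1.le]
      calc s * ‖ds j‖ ≤ η / (2 * D) * D :=
            mul_le_mul (hs.2.le.trans ht.2) hdj (norm_nonneg _) (by positivity)
        _ = η / 2 := by field_simp
    calc dist (xs j + s • ds j) x₀ ≤ dist (xs j + s • ds j) (xs j) + dist (xs j) x₀ :=
          dist_triangle _ _ _
      _ < η := by rw [dist_self_add_left]; linarith
  have hclose : ‖gradient (F i) (xs j + s • ds j) - gradient (F i) (xs j)‖ < ρ := by
    rw [← dist_eq_norm]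
    linarith [dist_triangle_right (gradient (F i) (xs j + s • ds j)) (gradient (F i) (xs j))
      (gradient (F i) x₀), hball hseg i, hball (hxj.trans (half_lt_self hη)) i]
  have hρD : ρ * D = (1 - σ) * c := by rw [hρ]; field_simp
  calc ⟪gradient (F i) (xs j + s • ds j), ds j⟫
      = ⟪gradient (F i) (xs j), ds j⟫
        + ⟪gradient (F i) (xs j + s • ds j) - gradient (F i) (xs j), ds j⟫ := by
        rw [inner_sub_left]; ring
    _ ≤ ⟪gradient (F i) (xs j), ds j⟫ + ρ * D := by
        gcongr
        exact (real_inner_le_norm _ _).trans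
          (mul_le_mul hclose.le hdj (norm_nonneg _) hρ_pos.le)
    _ ≤ σ * ⟪gradient (F i) (xs j), ds j⟫ := by rw [hρD]; nlinarith [hdescj i]

end Armijo

lemma tendsto_sub_succ_of_antitone {a : ℕ → ℝ} (ha : Antitone a) {φ : ℕ → ℕ}
    (hφ : StrictMono φ) {L : ℝ} (h : Tendsto (a ∘ φ) atTop (𝓝 L)) :
    Tendsto (fun k => a k - a (k + 1)) atTop (𝓝 0) := by
  have hL := (tendsto_iff_tendsto_subseq_of_antitone ha hφ.tendsto_atTop).2 h
  simpa using hL.sub (hL.comp (tendsto_add_atTop_nat 1))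

section BBArmijoSequence

variable {n m : ℕ} {F : Fin m → EuclideanSpace ℝ (Fin n) → ℝ}

noncomputable def scaledGradients (F : Fin m → EuclideanSpace ℝ (Fin n) → ℝ) (w : Fin m → ℝ)
    (y : EuclideanSpace ℝ (Fin n)) : Fin m → EuclideanSpace ℝ (Fin n) :=
  fun i => (w i)⁻¹ • gradient (F i) y

/-- A run of the Barzilai–Borwein descent method with Armijo backtracking. -/
structure IsBBArmijoSeq (F : Fin m → EuclideanSpace ℝ (Fin n) → ℝ) (σ γ αmin αmax : ℝ)
    (x : ℕ → EuclideanSpace ℝ (Fin n)) (α : ℕ → Fin m → ℝ) (d : ℕ → EuclideanSpace ℝ (Fin n))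
    (β : ℕ → ℝ) : Prop where
  weight_mem : ∀ k i, α k i ∈ Icc αmin αmax
  isMin_phi : ∀ k d', phi (scaledGradients F (α k) (x k)) (d k) ≤
    phi (scaledGradients F (α k) (x k)) d'
  armijoBacktrack : ∀ k, ArmijoBacktrack F (x k) (d k) σ γ (β k)
  step : ∀ k, x (k + 1) = x k + β k • d k

namespace IsBBArmijoSeq

variable {σ γ αmin αmax : ℝ} {x : ℕ → EuclideanSpace ℝ (Fin n)} {α : ℕ → Fin m → ℝ}
  {d : ℕ → EuclideanSpace ℝ (Fin n)} {β : ℕ → ℝ}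

lemma phi_nonpos (h : IsBBArmijoSeq F σ γ αmin αmax x α d β) (k : ℕ) :
    phi (scaledGradients F (α k) (x k)) (d k) ≤ 0 :=
  phi_zero _ ▸ h.isMin_phi k 0

lemma inner_gradient_le (h : IsBBArmijoSeq F σ γ αmin αmax x α d β) (hαmin : 0 < αmin)
    (k : ℕ) (i : Fin m) :
    ⟪gradient (F i) (x k), d k⟫ ≤ αmin * phi (scaledGradients F (α k) (x k)) (d k) :=
  inner_le_mul_phi_of_phi_nonpos (fun i => (h.weight_mem k i).1) hαmin (h.phi_nonpos k) i

lemma mul_le_sub_succ (h : IsBBArmijoSeq F σ γ αmin αmax x α d β) (hσ : 0 ≤ σ)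
    (hαmin : 0 < αmin) (k : ℕ) (i : Fin m) :
    σ * β k * -(αmin * phi (scaledGradients F (α k) (x k)) (d k)) ≤ F i (x k) - F i (x (k + 1)) :=
  h.step k ▸ (h.armijoBacktrack k).2.2.1.mul_le_sub hσ (h.armijoBacktrack k).1.le
    (fun i => by linarith [h.inner_gradient_le hαmin k i]) i

lemma antitone (h : IsBBArmijoSeq F σ γ αmin αmax x α d β) (hσ : 0 ≤ σ) (hαmin : 0 < αmin)
    (i : Fin m) : Antitone fun k => F i (x k) :=
  antitone_nat_of_succ_le fun k => by
    have := mul_nonneg (mul_nonneg hσ (h.armijoBacktrack k).1.le)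
      (neg_nonneg.2 (mul_nonpos_of_nonneg_of_nonpos hαmin.le (h.phi_nonpos k)))
    linarith [h.mul_le_sub_succ hσ hαmin k i]

variable {φ : ℕ → ℕ} {xstar : EuclideanSpace ℝ (Fin n)}

lemma exists_pos_eventually_phi_le [NeZero m] (h : IsBBArmijoSeq F σ γ αmin αmax x α d β)
    (hF : ∀ i, ContDiff ℝ 1 (F i)) (hαmin : 0 < αmin)
    (hxφ : Tendsto (x ∘ φ) atTop (𝓝 xstar)) {u : EuclideanSpace ℝ (Fin n)}
    (hu : ∀ i, ⟪gradient (F i) xstar, u⟫ < 0) :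
    ∃ c > 0, ∀ᶠ j in atTop, phi (scaledGradients F (α (φ j)) (x (φ j))) (d (φ j)) ≤ -c := by
  obtain ⟨a, ha, hua⟩ := exists_pos_eventually_inner_gradient_le hF hu
  have hu0 : u ≠ 0 := by rintro rfl; simpa using hu 0
  have hαmax : 0 < αmax := hαmin.trans_le ((h.weight_mem 0 0).1.trans (h.weight_mem 0 0).2)
  refine ⟨(a / αmax) ^ 2 / (2 * ‖u‖ ^ 2), by positivity, (hxφ.eventually hua).mono fun j hj => ?_⟩
  exact phi_le_of_isMin_of_inner_le (fun i => hαmin.trans_le (h.weight_mem _ i).1)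
    (fun i => (h.weight_mem _ i).2) (h.isMin_phi _) ha.le hj

lemma exists_pos_eventually_norm_le [NeZero m] (h : IsBBArmijoSeq F σ γ αmin αmax x α d β)
    (hF : ∀ i, ContDiff ℝ 1 (F i)) (hαmin : 0 < αmin) (hxφ : Tendsto (x ∘ φ) atTop (𝓝 xstar)) :
    ∃ D > 0, ∀ᶠ j in atTop, ‖d (φ j)‖ ≤ D := by
  have hG := (((continuous_gradient_of_contDiff (hF 0)).tendsto xstar).comp hxφ).norm
  refine ⟨2 * (‖gradient (F 0) xstar‖ + 1) / αmin, by positivity,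
    (hG.eventually_le_const (lt_add_one _)).mono fun j hj => ?_⟩
  calc ‖d (φ j)‖ ≤ 2 * ‖gradient (F 0) (x (φ j))‖ / αmin :=
        norm_le_of_phi_nonpos (fun i => (h.weight_mem _ i).1) hαmin (h.phi_nonpos _) 0
    _ ≤ 2 * (‖gradient (F 0) xstar‖ + 1) / αmin := by gcongr; exact hj

lemma tendsto_comp_stepsize_zero [NeZero m] (h : IsBBArmijoSeq F σ γ αmin αmax x α d β)
    (hF : ∀ i, ContDiff ℝ 1 (F i)) (hσ : 0 < σ) (hαmin : 0 < αmin) (hφ : StrictMono φ)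
    (hxφ : Tendsto (x ∘ φ) atTop (𝓝 xstar)) {c : ℝ} (hc : 0 < c)
    (hphi : ∀ᶠ j in atTop, phi (scaledGradients F (α (φ j)) (x (φ j))) (d (φ j)) ≤ -c) :
    Tendsto (β ∘ φ) atTop (𝓝 0) := by
  have hgap := (tendsto_sub_succ_of_antitone (h.antitone hσ.le hαmin 0) hφ
    (((hF 0).continuous.tendsto xstar).comp hxφ)).comp hφ.tendsto_atTop
  refine squeeze_zero' (Eventually.of_forall fun j => (h.armijoBacktrack _).1.le)
    (hphi.mono fun j hj => ?_) (by simpa using hgap.div_const (σ * (αmin * c)))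
  rw [Function.comp_apply, le_div_iff₀ (by positivity)]
  have hσβ : 0 ≤ σ * β (φ j) := mul_nonneg hσ.le (h.armijoBacktrack _).1.le
  nlinarith [h.mul_le_sub_succ hσ.le hαmin (φ j) 0,
    mul_le_mul_of_nonneg_left hj (mul_nonneg hσβ hαmin.le)]

theorem paretoCritical_of_mapClusterPt [NeZero m] (h : IsBBArmijoSeq F σ γ αmin αmax x α d β)
    (hF : ∀ i, ContDiff ℝ 1 (F i)) (hσ : σ ∈ Ioo 0 1) (hγ : 0 < γ) (hαmin : 0 < αmin)
    (hcluster : MapClusterPt xstar atTop x) : ParetoCritical F xstar := by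
  rintro ⟨u, hu⟩
  obtain ⟨φ, hφ, hxφ⟩ := hcluster.tendsto_subseq
  obtain ⟨c, hc, hphi⟩ := h.exists_pos_eventually_phi_le hF hαmin hxφ hu
  obtain ⟨D, hD, hdD⟩ := h.exists_pos_eventually_norm_le hF hαmin hxφ
  obtain ⟨τ, hτ, harmijo⟩ := exists_pos_eventually_armijoAt hF hσ.2 (mul_pos hαmin hc) hD hxφ hdD
    (hphi.mono fun j hj i => (h.inner_gradient_le hαmin _ i).trans (by nlinarith))
  have hβ := h.tendsto_comp_stepsize_zero hF hσ.1 hαmin hφ hxφ hc hphi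
  obtain ⟨j, hjarmijo, hj1, hjτ⟩ := (harmijo.and ((hβ.eventually_lt_const one_pos).and
    ((hβ.div_const γ).eventually_le_const (u := τ) (by rwa [zero_div])))).exists
  rcases (h.armijoBacktrack (φ j)).2.2.2 with hβ1 | hfail
  · exact hj1.ne hβ1
  · exact hfail (hjarmijo _ ⟨div_pos (h.armijoBacktrack _).1 hγ, hjτ⟩)

end IsBBArmijoSeq

end BBArmijoSequence

theorem stmt_18_general {n m : ℕ} (hm : 0 < m) (F : Fin m → EuclideanSpace ℝ (Fin n) → ℝ)
    (hF : ∀ i, ContDiff ℝ 1 (F i))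
    (σ γ : ℝ) (hσ : σ ∈ Set.Ioo (0 : ℝ) 1) (hγ : γ ∈ Set.Ioo (0 : ℝ) 1)
    (αmin αmax : ℝ) (hαmin : 0 < αmin)
    (x : ℕ → EuclideanSpace ℝ (Fin n)) (α : ℕ → Fin m → ℝ)
    (hα : ∀ k i, α k i ∈ Set.Icc αmin αmax)
    (d : ℕ → EuclideanSpace ℝ (Fin n)) (β : ℕ → ℝ)
    (hd : ∀ k, (∀ d' : EuclideanSpace ℝ (Fin n),
      phi (fun i => (α k i)⁻¹ • gradient (F i) (x k)) (d k) ≤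
        phi (fun i => (α k i)⁻¹ • gradient (F i) (x k)) d') ∧ d k ≠ 0)
    (hβ : ∀ k, ArmijoBacktrack F (x k) (d k) σ γ (β k))
    (hstep : ∀ k, x (k + 1) = x k + β k • d k) :
    ∀ xstar : EuclideanSpace ℝ (Fin n),
      MapClusterPt xstar Filter.atTop x → ParetoCritical F xstar := by
  have : NeZero m := ⟨hm.ne'⟩
  exact fun _ => IsBBArmijoSeq.paretoCritical_of_mapClusterPt ⟨hα, fun k => (hd k).1, hβ, hstep⟩
    hF hσ hγ.1 hαmin

theorem stmt_18 {n m : ℕ} (hm : 0 < m) (F : Fin m → EuclideanSpace ℝ (Fin n) → ℝ)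
    (hF : ∀ i, ContDiff ℝ 1 (F i))
    (σ γ : ℝ) (hσ : σ ∈ Set.Ioo (0 : ℝ) 1) (hγ : γ ∈ Set.Ioo (0 : ℝ) 1)
    (αmin αmax : ℝ) (hαmin : 0 < αmin) (hαminmax : αmin ≤ αmax)
    (x : ℕ → EuclideanSpace ℝ (Fin n)) (α : ℕ → Fin m → ℝ)
    (hα : ∀ k i, α k i ∈ Set.Icc αmin αmax)
    (d : ℕ → EuclideanSpace ℝ (Fin n)) (β : ℕ → ℝ)
    (hd : ∀ k, (∀ d' : EuclideanSpace ℝ (Fin n),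
      phi (fun i => (α k i)⁻¹ • gradient (F i) (x k)) (d k) ≤
        phi (fun i => (α k i)⁻¹ • gradient (F i) (x k)) d') ∧ d k ≠ 0)
    (hβ : ∀ k, ArmijoBacktrack F (x k) (d k) σ γ (β k))
    (hstep : ∀ k, x (k + 1) = x k + β k • d k)
    (hlevel : Bornology.IsBounded
      {y : EuclideanSpace ℝ (Fin n) | ∀ i, F i y ≤ F i (x 0)}) :
    ∀ xstar : EuclideanSpace ℝ (Fin n),
      MapClusterPt xstar Filter.atTop x → ParetoCritical F xstar :=
  stmt_18_general hm F hF σ γ hσ hγ αmin αmax hαmin x α hα d β hd hβ hstep
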